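/- In the Artin braid group B_n, for every 1 ≤ i ≤ n−2, the product of the three cusp braids arising from regenerating a tangency on the line side satisfies σ_{i+1}³ · (σ_{i+1}^{−1} σ_i³ σ_{i+1}) · (σ_i² σ_{i+1}³ σ_i^{−2}) = σ_{i+1} σ_i³ σ_{i+1} σ_i³ σ_{i+1}. -/

import Mathlib

/-- The braid relations among `m` Artin generators `σ_1, …, σ_m`, where the
generator `σ_{k+1}` is represented by the index `k : Fin m`:
`σ_i σ_{i+1} σ_i = σ_{i+1} σ_i σ_{i+1}` and `σ_i σ_j = σ_j σ_i` for `|i - j| ≥ 2`. -/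
def braidRels (m : ℕ) : Set (FreeGroup (Fin m)) :=
  { r | (∃ i j : Fin m, (i : ℕ) + 1 = (j : ℕ) ∧
          r = FreeGroup.of i * FreeGroup.of j * FreeGroup.of i *
              (FreeGroup.of j * FreeGroup.of i * FreeGroup.of j)⁻¹) ∨
        (∃ i j : Fin m, (i : ℕ) + 2 ≤ (j : ℕ) ∧
          r = FreeGroup.of i * FreeGroup.of j * (FreeGroup.of i)⁻¹ * (FreeGroup.of j)⁻¹) }

/-- The Artin braid group `B_n` on `n` strands, presented by the generators
`σ_1, …, σ_{n-1}` subject to the braid relations. -/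
def BraidGroup (n : ℕ) : Type := PresentedGroup (braidRels (n - 1))

instance (n : ℕ) : Group (BraidGroup n) :=
  inferInstanceAs (Group (PresentedGroup (braidRels (n - 1))))

/-- The Artin generator `σ_k` of the braid group `B_n`, defined for `1 ≤ k ≤ n - 1`
(with junk value `1` for indices out of range). -/
def σ (n : ℕ) (k : ℕ) : BraidGroup n :=
  if h : 1 ≤ k ∧ k ≤ n - 1 then
    (PresentedGroup.of (⟨k - 1, by omega⟩ : Fin (n - 1)) : PresentedGroup (braidRels (n - 1)))
  else 1

/-!
Only the braid relation between `a = σ_i` and `b = σ_{i+1}` is needed. Cancelling `b` on the left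
and `a²` on the right reduces the claim to the identity of positive words
`b a³ b a² b³ = a³ b a³ b a²`, which takes five applications of `a b aᵏ = bᵏ a b` and
`aᵏ b a = b a bᵏ` and of their mirror images with `a` and `b` swapped.
-/

section BraidRelation

variable {G : Type*} [Group G] {a b : G}

theorem mul_mul_pow_of_braid (h : a * b * a = b * a * b) (k : ℕ) :
    a * b * a ^ k = b ^ k * a * b := by
  induction k with
  | zero => simp
  | succ k ih =>
    calc a * b * a ^ (k + 1) = b ^ k * (a * b * a) := by rw [pow_succ, ← mul_assoc, ih]; group
      _ = b ^ (k + 1) * a * b := by rw [h]; group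

theorem pow_mul_mul_of_braid (h : a * b * a = b * a * b) (k : ℕ) :
    a ^ k * b * a = b * a * b ^ k := by
  induction k with
  | zero => simp
  | succ k ih =>
    calc a ^ (k + 1) * b * a = a * (a ^ k * b * a) := by group
      _ = (a * b * a) * b ^ k := by rw [ih]; group
      _ = b * a * b ^ (k + 1) := by rw [h]; group

theorem cusp_product_eq_of_braid (h : a * b * a = b * a * b) :
    b ^ 3 * (b⁻¹ * a ^ 3 * b) * (a ^ 2 * b ^ 3 * (a ^ 2)⁻¹) = b * a ^ 3 * b * a ^ 3 * b := by
  have positive_words : b * a ^ 3 * b * a ^ 2 * b ^ 3 = a ^ 3 * b * a ^ 3 * b * a ^ 2 :=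
    calc b * a ^ 3 * b * a ^ 2 * b ^ 3
      _ = b * a ^ 2 * (b * a * b) * a * b ^ 3 := by
          rw [← h]; simp only [pow_succ, pow_zero, one_mul, mul_assoc]
      _ = b * a ^ 2 * b * a * (a ^ 2 * b * a) * b := by
          rw [← mul_mul_pow_of_braid h.symm 2]; simp only [pow_succ, pow_zero, one_mul, mul_assoc]
      _ = b * a * (b ^ 3 * a * b) * b * a * b := by
          rw [← mul_mul_pow_of_braid h 3]; simp only [pow_succ, pow_zero, one_mul, mul_assoc]
      _ = b * a * b ^ 3 * a * (a * b * a ^ 2) := by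
          rw [← pow_mul_mul_of_braid h.symm 2]; simp only [pow_succ, pow_zero, one_mul, mul_assoc]
      _ = (a ^ 3 * b * a) * a ^ 2 * b * a ^ 2 := by
          rw [← mul_mul_pow_of_braid h.symm 3]; simp only [pow_succ, pow_zero, one_mul, mul_assoc]
      _ = a ^ 3 * b * a ^ 3 * b * a ^ 2 := by simp only [pow_succ, pow_zero, one_mul, mul_assoc]
  calc b ^ 3 * (b⁻¹ * a ^ 3 * b) * (a ^ 2 * b ^ 3 * (a ^ 2)⁻¹)
    _ = b * (b * a ^ 3 * b * a ^ 2 * b ^ 3) * (a ^ 2)⁻¹ := by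
        simp only [pow_succ, pow_zero, one_mul, mul_assoc, mul_inv_cancel_left]
    _ = b * (a ^ 3 * b * a ^ 3 * b) * a ^ 2 * (a ^ 2)⁻¹ := by
        rw [positive_words]; simp only [mul_assoc]
    _ = b * a ^ 3 * b * a ^ 3 * b := by rw [mul_inv_cancel_right]; simp only [mul_assoc]

end BraidRelation

theorem σ_eq_of {n k : ℕ} (h : 1 ≤ k ∧ k ≤ n - 1) :
    σ n k = PresentedGroup.of (⟨k - 1, by omega⟩ : Fin (n - 1)) :=
  dif_pos h

theorem σ_mul_σ_succ_mul_σ {n i : ℕ} (h1 : 1 ≤ i) (h2 : i + 1 ≤ n - 1) :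
    σ n i * σ n (i + 1) * σ n i = σ n (i + 1) * σ n i * σ n (i + 1) := by
  rw [σ_eq_of ⟨h1, by omega⟩, σ_eq_of ⟨by omega, h2⟩]
  exact PresentedGroup.mk_eq_mk_of_mul_inv_mem (Or.inl ⟨_, _, by simp only; omega, rfl⟩)

/-- In `B_n`, for `1 ≤ i ≤ n - 2`, the product of the three cusp braids from
regenerating a tangency on the line side satisfies
`σ_{i+1}³ (σ_{i+1}⁻¹ σ_i³ σ_{i+1})(σ_i² σ_{i+1}³ σ_i⁻²) = σ_{i+1} σ_i³ σ_{i+1} σ_i³ σ_{i+1}`. -/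
theorem three_cusps_line_side (n i : ℕ) (h1 : 1 ≤ i) (h2 : i ≤ n - 2) :
    σ n (i + 1) ^ 3 * ((σ n (i + 1))⁻¹ * σ n i ^ 3 * σ n (i + 1)) *
        (σ n i ^ 2 * σ n (i + 1) ^ 3 * (σ n i ^ 2)⁻¹) =
      σ n (i + 1) * σ n i ^ 3 * σ n (i + 1) * σ n i ^ 3 * σ n (i + 1) :=
  cusp_product_eq_of_braid (σ_mul_σ_succ_mul_σ h1 (by omega))
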